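/- Let λ > 0, let Θ̂ be a graphical lasso solution at λ for S, and let Ŵ = Θ̂⁻¹. Then for all indices i, j: if Θ̂_ij > 0 then Ŵ_ij = S_ij + λ, and if Θ̂_ij < 0 then Ŵ_ij = S_ij − λ. -/

import Mathlib

open Matrix

/-- The graphical lasso objective: `f(Θ) = -log det Θ + tr(AΘ) + λ ∑_{i,j} |Θ_ij|`. -/
noncomputable def glassoObj {n : Type*} [Fintype n] [DecidableEq n]
    (lam : ℝ) (A Θ : Matrix n n ℝ) : ℝ :=
  -Real.log Θ.det + (A * Θ).trace + lam * ∑ i, ∑ j, |Θ i j|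

/-- `Θ` is a graphical lasso solution at `lam` for `A`: it is (symmetric) positive definite and
minimizes the graphical lasso objective over all symmetric positive definite matrices.
(Over `ℝ`, `Matrix.PosDef` includes symmetry.) -/
def IsGlassoSol {n : Type*} [Fintype n] [DecidableEq n]
    (lam : ℝ) (A Θ : Matrix n n ℝ) : Prop :=
  Θ.PosDef ∧ ∀ Ψ : Matrix n n ℝ, Ψ.PosDef → glassoObj lam A Θ ≤ glassoObj lam A Ψ

/-- The thresholded sample covariance graph: an edge between distinct `i, j` iff `|S i j| > lam`. -/
def covGraph {n : Type*} (lam : ℝ) (S : Matrix n n ℝ) : SimpleGraph n :=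
  SimpleGraph.fromRel (fun i j => lam < |S i j|)

/-- The estimated concentration graph: an edge between distinct `i, j` iff `Θ i j ≠ 0`. -/
def concGraph {n : Type*} (Θ : Matrix n n ℝ) : SimpleGraph n :=
  SimpleGraph.fromRel (fun i j => Θ i j ≠ 0)

/-!
At a minimizer `Θ`, perturb along the symmetric direction `E = eᵢⱼ + eⱼᵢ`. Positive definiteness
is an open condition, so `Θ + t • E` stays admissible for small `t`, and `t = 0` is a local
minimum of the objective along this line. Since `E` is supported where `Θ` is nonzero, the `ℓ¹`
term is differentiable there with derivative `2 λ sign Θᵢⱼ`, while Jacobi's formula gives the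
derivative `tr (Θ⁻¹ E) = 2 Wᵢⱼ` of `log det`. Setting the derivative to zero yields
`Wᵢⱼ = Sᵢⱼ + λ sign Θᵢⱼ`.
-/

open Filter Topology

namespace Matrix

variable {n : Type*} [Fintype n]

theorem PosDef.eventually_posDef {X : Type*} [TopologicalSpace X] {A : X → Matrix n n ℝ}
    {x₀ : X} (hA : Continuous A) (hsymm : ∀ x, (A x).IsHermitian) (h₀ : (A x₀).PosDef) :
    ∀ᶠ x in 𝓝 x₀, (A x).PosDef := by
  have hquad : Continuous fun z : X × (n → ℝ) => z.2 ⬝ᵥ A z.1 *ᵥ z.2 :=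
    continuous_snd.dotProduct ((hA.comp continuous_fst).matrix_mulVec continuous_snd)
  have hsphere : ∀ᶠ x in 𝓝 x₀, ∀ v ∈ Metric.sphere (0 : n → ℝ) 1, 0 < v ⬝ᵥ A x *ᵥ v := by
    refine (isCompact_sphere 0 1).eventually_forall_of_forall_eventually fun v hv => ?_
    have hv0 : v ≠ 0 := ne_zero_of_mem_unit_sphere ⟨v, hv⟩
    have hpos : 0 < v ⬝ᵥ A x₀ *ᵥ v := by simpa using h₀.dotProduct_mulVec_pos hv0
    exact hquad.continuousAt.eventually (lt_mem_nhds hpos)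
  filter_upwards [hsphere] with x hx
  refine posDef_iff_dotProduct_mulVec.2 ⟨hsymm x, fun w hw => ?_⟩
  have hscale : w ⬝ᵥ A x *ᵥ w = ‖w‖ ^ 2 * ((‖w‖⁻¹ • w) ⬝ᵥ A x *ᵥ (‖w‖⁻¹ • w)) := by
    rw [mulVec_smul, dotProduct_smul, smul_dotProduct, smul_eq_mul, smul_eq_mul]
    field_simp
  rw [star_trivial, hscale]
  exact mul_pos (pow_pos (norm_pos_iff.2 hw) 2)
    (hx _ (mem_sphere_zero_iff_norm.2 (norm_smul_inv_norm hw)))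

theorem hasDerivAt_sum_abs_add_smul {A E : Matrix n n ℝ}
    (hsupp : ∀ k l, E k l ≠ 0 → A k l ≠ 0) :
    HasDerivAt (fun t : ℝ => ∑ k, ∑ l, |(A + t • E) k l|)
      (∑ k, ∑ l, SignType.sign (A k l) * E k l) 0 := by
  refine HasDerivAt.fun_sum fun k _ => HasDerivAt.fun_sum fun l _ => ?_
  simp only [add_apply, smul_apply, smul_eq_mul]
  by_cases hE : E k l = 0
  · simpa [hE] using hasDerivAt_const (0 : ℝ) |A k l|
  · have hline : HasDerivAt (fun t : ℝ => A k l + t * E k l) (E k l) 0 := by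
      simpa using ((hasDerivAt_id (0 : ℝ)).mul_const (E k l)).const_add (A k l)
    have hA : A k l + 0 * E k l ≠ 0 := by simpa using hsupp k l hE
    simpa [Function.comp_def] using (hasDerivAt_abs hA).comp (0 : ℝ) hline

variable [DecidableEq n]

theorem hasDerivAt_det_one_add_smul {𝕜 : Type*} [NontriviallyNormedField 𝕜]
    (M : Matrix n n 𝕜) :
    HasDerivAt (fun t : 𝕜 => (1 + t • M).det) M.trace 0 := by
  have hpoly : (fun t : 𝕜 => (1 + t • M).det)
      = fun t => (det (1 + (Polynomial.X : Polynomial 𝕜) • M.map Polynomial.C)).eval t := by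
    funext t
    rw [← Polynomial.coe_evalRingHom, RingHom.map_det]
    congr 1
    ext k l
    by_cases hkl : k = l <;> simp [hkl, mul_comm t]
  rw [hpoly, ← derivative_det_one_add_X_smul]
  exact Polynomial.hasDerivAt _ 0

theorem hasDerivAt_det_add_smul {𝕜 : Type*} [NontriviallyNormedField 𝕜] {A : Matrix n n 𝕜}
    (hA : IsUnit A.det) (E : Matrix n n 𝕜) :
    HasDerivAt (fun t : 𝕜 => (A + t • E).det) (A.det * (A⁻¹ * E).trace) 0 := by
  have hfac : ∀ t : 𝕜, A + t • E = A * (1 + t • (A⁻¹ * E)) := fun t => by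
    rw [mul_add, mul_one, Matrix.mul_smul, ← mul_assoc, mul_nonsing_inv _ hA, one_mul]
  simp_rw [hfac, det_mul]
  exact (hasDerivAt_det_one_add_smul _).const_mul _

theorem hasDerivAt_log_det_add_smul {A : Matrix n n ℝ} (hA : A.det ≠ 0) (E : Matrix n n ℝ) :
    HasDerivAt (fun t : ℝ => Real.log (A + t • E).det) (A⁻¹ * E).trace 0 := by
  convert (hasDerivAt_det_add_smul hA.isUnit E).log (by simpa using hA) using 1
  simp [hA]

end Matrix

theorem IsGlassoSol.trace_inv_mul_eq {n : Type*} [Fintype n] [DecidableEq n] {lam : ℝ}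
    {A Θ E : Matrix n n ℝ} (hΘ : IsGlassoSol lam A Θ) (hE : E.IsHermitian)
    (hsupp : ∀ k l, E k l ≠ 0 → Θ k l ≠ 0) :
    (Θ⁻¹ * E).trace = (A * E).trace + lam * ∑ k, ∑ l, SignType.sign (Θ k l) * E k l := by
  have hline : ∀ᶠ t in 𝓝 (0 : ℝ), (Θ + t • E).PosDef :=
    PosDef.eventually_posDef (continuous_const.add (continuous_id.smul continuous_const))
      (fun t => hΘ.1.1.add (hE.smul (IsSelfAdjoint.all t))) (by simpa using hΘ.1)
  have hmin : IsLocalMin (fun t : ℝ => glassoObj lam A (Θ + t • E)) 0 :=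
    hline.mono fun t ht => by simpa using hΘ.2 _ ht
  have htrace : HasDerivAt (fun t : ℝ => (A * (Θ + t • E)).trace) (A * E).trace 0 := by
    simp only [Matrix.mul_add, Matrix.mul_smul, trace_add, trace_smul, smul_eq_mul]
    simpa using ((hasDerivAt_id (0 : ℝ)).mul_const (A * E).trace).const_add (A * Θ).trace
  have hderiv := (((hasDerivAt_log_det_add_smul hΘ.1.det_pos.ne' E).neg.add htrace).add
    ((hasDerivAt_sum_abs_add_smul hsupp).const_mul lam))
  linarith [hmin.hasDerivAt_eq_zero hderiv]

theorem IsGlassoSol.inv_apply_eq {n : Type*} [Fintype n] [DecidableEq n] {lam : ℝ}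
    {A Θ : Matrix n n ℝ} (hΘ : IsGlassoSol lam A Θ) (hA : A.IsHermitian) {i j : n}
    (hij : Θ i j ≠ 0) :
    Θ⁻¹ i j = A i j + lam * SignType.sign (Θ i j) := by
  set E : Matrix n n ℝ := single i j 1 + single j i 1
  have hE : E.IsHermitian := by simp [E, IsHermitian, add_comm]
  have hΘji : Θ j i = Θ i j := by simpa using hΘ.1.1.apply i j
  have hsupp : ∀ k l, E k l ≠ 0 → Θ k l ≠ 0 := by
    intro k l hkl
    simp only [E, Matrix.add_apply, single_apply] at hkl
    split_ifs at hkl with h₁ h₂ h₂ <;> grind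
  have htrace : ∀ M : Matrix n n ℝ, (M * E).trace = M j i + M i j := by
    intro M; simp [E, Matrix.mul_add, trace_mul_single]
  have hsign : ∑ k, ∑ l, (SignType.sign (Θ k l) : ℝ) * E k l = 2 * SignType.sign (Θ i j) := by
    simp [E, single_apply, mul_add, Finset.sum_add_distrib, ite_and, hΘji, two_mul]
  have hkkt := hΘ.trace_inv_mul_eq hE hsupp
  have hWji : Θ⁻¹ j i = Θ⁻¹ i j := by simpa using hΘ.1.inv.1.apply i j
  have hAji : A j i = A i j := by simpa using hA.apply i j
  rw [htrace, htrace, hsign, hWji, hAji] at hkkt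
  linarith

theorem glasso_kkt_nonzero_entries_general
    (p : ℕ) (S : Matrix (Fin p) (Fin p) ℝ) (hS : S.PosSemidef)
    (lam : ℝ)
    (Θ : Matrix (Fin p) (Fin p) ℝ) (hΘ : IsGlassoSol lam S Θ)
    (W : Matrix (Fin p) (Fin p) ℝ) (hW : W = Θ⁻¹) :
    ∀ i j : Fin p,
      (0 < Θ i j → W i j = S i j + lam) ∧ (Θ i j < 0 → W i j = S i j - lam) := by
  subst hW
  refine fun i j => ⟨fun hpos => ?_, fun hneg => ?_⟩
  · simpa [hpos] using hΘ.inv_apply_eq hS.1 hpos.ne'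
  · simpa [hneg, sub_eq_add_neg] using hΘ.inv_apply_eq hS.1 hneg.ne

/-- KKT, active entries: if `Θ i j > 0` then `(Θ⁻¹) i j = S i j + lam`,
and if `Θ i j < 0` then `(Θ⁻¹) i j = S i j - lam`. -/
theorem glasso_kkt_nonzero_entries
    (p : ℕ) (hp : 1 ≤ p) (S : Matrix (Fin p) (Fin p) ℝ) (hS : S.PosSemidef)
    (lam : ℝ) (hlam : 0 < lam)
    (Θ : Matrix (Fin p) (Fin p) ℝ) (hΘ : IsGlassoSol lam S Θ)
    (W : Matrix (Fin p) (Fin p) ℝ) (hW : W = Θ⁻¹) :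
    ∀ i j : Fin p,
      (0 < Θ i j → W i j = S i j + lam) ∧ (Θ i j < 0 → W i j = S i j - lam) :=
  glasso_kkt_nonzero_entries_general p S hS lam Θ hΘ W hW
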